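/- arXiv:1401.1266 — 2 statements merged into one kernel-verified Lean document; each statement's English description precedes it below -/
import Mathlib

section
/- Let A be a c.e. subset of ℕ of Type 7. Then there exists a Type 7 generating set {D_0, R_0, R_1, …} for D(A) such that: (1) for every j, the set R_j ∖ D_0 is infinite; and (2) D_0 ⊆ ⋃_i R_i and the pairwise disjoint union ⋃_i R_i equals ℕ ∖ A. -/
open Set Function

/-- A set of naturals is computably enumerable (c.e.) -/
def CESet (A : Set ℕ) : Prop := REPred (· ∈ A)

/-- A set of naturals is computable -/
def ComputableSet (A : Set ℕ) : Prop := ComputablePred (· ∈ A)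

/-- X ⊆* Y : X is almost contained in Y -/
def SubsetStar (X Y : Set ℕ) : Prop := (X \ Y).Finite

/-- X =* Y : X and Y differ by a finite set -/
def EqStar (X Y : Set ℕ) : Prop := (X \ Y).Finite ∧ (Y \ X).Finite

/-- G is a generating set for 𝒟(A): a countable family of c.e. sets, each disjoint
from A, such that every c.e. set disjoint from A is almost covered by finitely many
members of G. -/
def Generates (A : Set ℕ) (G : Set (Set ℕ)) : Prop :=
  G.Countable ∧ (∀ X ∈ G, CESet X) ∧ (∀ X ∈ G, Disjoint X A) ∧
  ∀ D : Set ℕ, CESet D → Disjoint D A →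
    ∃ F : Set (Set ℕ), F ⊆ G ∧ F.Finite ∧ SubsetStar D (⋃₀ F)

/-- S is simple -/
def SimpleSet (S : Set ℕ) : Prop :=
  CESet S ∧ Sᶜ.Infinite ∧ ∀ W : Set ℕ, CESet W → Disjoint W S → W.Finite

/-- A is 𝒟-maximal -/
def DMaximal (A : Set ℕ) : Prop :=
  CESet A ∧ ∀ W : Set ℕ, CESet W → ∃ D : Set ℕ, CESet D ∧ Disjoint D A ∧
    (SubsetStar W (A ∪ D) ∨ EqStar (W ∪ A ∪ D) Set.univ)

/-- M is r-maximal -/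
def RMaximal (M : Set ℕ) : Prop :=
  CESet M ∧ Mᶜ.Infinite ∧
    ∀ R : Set ℕ, ComputableSet R → (R ∩ Mᶜ).Finite ∨ (Rᶜ ∩ Mᶜ).Finite

/-- M is maximal -/
def MaximalSet (M : Set ℕ) : Prop :=
  CESet M ∧ Mᶜ.Infinite ∧
    ∀ W : Set ℕ, CESet W → M ⊆ W → (W \ M).Finite ∨ Wᶜ.Finite

/-- B is atomless -/
def AtomlessSet (B : Set ℕ) : Prop :=
  ∀ C : Set ℕ, CESet C → B ⊆ C → Cᶜ.Infinite →
    ∃ E : Set ℕ, CESet E ∧ SubsetStar C E ∧ (E \ C).Infinite ∧ Eᶜ.Infinite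

/-- A0, A1 form a Friedberg splitting of A -/
def FriedbergSplitting (A0 A1 A : Set ℕ) : Prop :=
  CESet A0 ∧ CESet A1 ∧ Disjoint A0 A1 ∧ A0 ∪ A1 = A ∧
    ∀ W : Set ℕ, CESet W → ¬ CESet (W \ A) → ¬ CESet (W \ A0) ∧ ¬ CESet (W \ A1)

/-- E is a major subset of D -/
def MajorIn (E D : Set ℕ) : Prop :=
  CESet E ∧ CESet D ∧ E ⊆ D ∧ (D \ E).Infinite ∧
    ∀ W : Set ℕ, CESet W → SubsetStar Dᶜ W → SubsetStar Eᶜ W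

/-- H is hh-simple: the lattice of c.e. supersets of H mod finite is a boolean algebra -/
def HHSimple (H : Set ℕ) : Prop :=
  CESet H ∧ Hᶜ.Infinite ∧
    ∀ W : Set ℕ, CESet W → ∃ V : Set ℕ, CESet V ∧
      EqStar ((W ∪ H) ∩ (V ∪ H)) H ∧ EqStar (W ∪ V ∪ H) Set.univ

/-- A is strongly r-separable -/
def StronglyRSeparable (A : Set ℕ) : Prop :=
  ∀ B : Set ℕ, CESet B → Disjoint B A →
    ∃ C : Set ℕ, ComputableSet C ∧ B ⊆ C ∧ Disjoint C A ∧ (C \ B).Infinite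

/-- Structure of a Type 5 generating family: D0 together with the R_i. -/
def Type5Family (D0 : Set ℕ) (R : ℕ → Set ℕ) : Prop :=
  CESet D0 ∧ ¬ ComputableSet D0 ∧ D0.Infinite ∧
  Function.Injective R ∧ (∀ i, D0 ≠ R i) ∧
  (∀ i, ComputableSet (R i) ∧ (R i).Infinite) ∧
  Pairwise (Function.onFun Disjoint R) ∧
  (∀ i, Disjoint D0 (R i))

/-- Structure of a Type 7 generating family: D0 together with the R_i. -/
def Type7Family (D0 : Set ℕ) (R : ℕ → Set ℕ) : Prop :=
  CESet D0 ∧ ¬ ComputableSet D0 ∧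
  Function.Injective R ∧ (∀ i, D0 ≠ R i) ∧
  (∀ i, ComputableSet (R i) ∧ (R i).Infinite) ∧
  Pairwise (Function.onFun Disjoint R) ∧
  {i : ℕ | (D0 ∩ R i).Nonempty}.Infinite

/-- Structure of a Type 8 generating family: the D_i together with the R_i. -/
def Type8Family (D R : ℕ → Set ℕ) : Prop :=
  Function.Injective D ∧ Function.Injective R ∧ (∀ i j, D i ≠ R j) ∧
  (∀ i, CESet (D i) ∧ ¬ ComputableSet (D i)) ∧
  Pairwise (Function.onFun Disjoint D) ∧
  (∀ i, ComputableSet (R i) ∧ (R i).Infinite) ∧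
  Pairwise (Function.onFun Disjoint R)

/-- Structure of a Type 9 generating family: the nested D_i together with the R_i. -/
def Type9Family (D R : ℕ → Set ℕ) : Prop :=
  Function.Injective R ∧ (∀ i j, D i ≠ R j) ∧
  (∀ i, ComputableSet (R i) ∧ (R i).Infinite) ∧
  Pairwise (Function.onFun Disjoint R) ∧
  (∀ i, CESet (D i) ∧ ¬ ComputableSet (D i) ∧ (D i).Infinite) ∧
  (∀ l, D l ⊆ D (l + 1)) ∧
  (∀ l, ¬ CESet (D (l + 1) \ D l)) ∧
  (∀ l, {j : ℕ | (R j \ D l).Infinite}.Infinite)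

def IsType1 (G : Set (Set ℕ)) : Prop := G = {∅}

def IsType2 (G : Set (Set ℕ)) : Prop :=
  ∃ R : Set ℕ, G = {R} ∧ ComputableSet R ∧ R.Infinite

def IsType3 (G : Set (Set ℕ)) : Prop :=
  ∃ W : Set ℕ, G = {W} ∧ CESet W ∧ ¬ ComputableSet W ∧ W.Infinite

def IsType4 (G : Set (Set ℕ)) : Prop :=
  ∃ R : ℕ → Set ℕ, G = Set.range R ∧ Function.Injective R ∧
    (∀ i, ComputableSet (R i) ∧ (R i).Infinite) ∧
    Pairwise (Function.onFun Disjoint R)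

def IsType5 (G : Set (Set ℕ)) : Prop :=
  ∃ (D0 : Set ℕ) (R : ℕ → Set ℕ), G = insert D0 (Set.range R) ∧ Type5Family D0 R

def IsType6 (G : Set (Set ℕ)) : Prop :=
  ∃ D : ℕ → Set ℕ, G = Set.range D ∧ Function.Injective D ∧
    (∀ i, CESet (D i) ∧ ¬ ComputableSet (D i) ∧ (D i).Infinite) ∧
    Pairwise (Function.onFun Disjoint D)

def IsType7 (G : Set (Set ℕ)) : Prop :=
  ∃ (D0 : Set ℕ) (R : ℕ → Set ℕ), G = insert D0 (Set.range R) ∧ Type7Family D0 R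

def IsType8 (G : Set (Set ℕ)) : Prop :=
  ∃ D R : ℕ → Set ℕ, G = Set.range D ∪ Set.range R ∧ Type8Family D R

def IsType9 (G : Set (Set ℕ)) : Prop :=
  ∃ D R : ℕ → Set ℕ, G = Set.range D ∪ Set.range R ∧ Type9Family D R

def IsType10 (G : Set (Set ℕ)) : Prop :=
  ∃ D : ℕ → Set ℕ, G = Set.range D ∧
    (∀ i, CESet (D i) ∧ ¬ ComputableSet (D i) ∧ (D i).Infinite) ∧
    (∀ l, D l ⊆ D (l + 1)) ∧
    (∀ l, ¬ CESet (D (l + 1) \ D l))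

/-- G is a generating set of Type n (n = 1, …, 10). -/
def GenTypeN (n : ℕ) (G : Set (Set ℕ)) : Prop :=
  match n with
  | 1 => IsType1 G
  | 2 => IsType2 G
  | 3 => IsType3 G
  | 4 => IsType4 G
  | 5 => IsType5 G
  | 6 => IsType6 G
  | 7 => IsType7 G
  | 8 => IsType8 G
  | 9 => IsType9 G
  | 10 => IsType10 G
  | _ => False

/-- The c.e. set A is of Type n: 𝒟(A) has a generating set of Type n
but no generating set of any Type m < n. -/
def SetOfType (A : Set ℕ) (n : ℕ) : Prop :=
  (∃ G : Set (Set ℕ), Generates A G ∧ GenTypeN n G) ∧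
  ∀ m : ℕ, m < n → ¬ ∃ G : Set (Set ℕ), Generates A G ∧ GenTypeN m G

/-- (F_i) is an A-special list. -/
def ASpecialList (A : Set ℕ) (F : ℕ → Set ℕ) : Prop :=
  F 0 = A ∧ (∀ i, CESet (F i) ∧ ¬ ComputableSet (F i)) ∧
  Pairwise (Function.onFun Disjoint F) ∧
  ∀ W : Set ℕ, CESet W → ∃ i : ℕ,
    SubsetStar W (⋃ l ≤ i, F l) ∨ EqStar (W ∪ ⋃ l ≤ i, F l) Set.univ

section Helpers

theorem rePred_or' {p q : ℕ → Prop} (hp : REPred p) (hq : REPred q) :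
    REPred fun a => p a ∨ q a := by
  obtain ⟨k, hk, H⟩ := Partrec.merge' hp hq
  exact hk.dom_re.of_eq fun a => by rw [(H a).2]; simp [Part.assert, Part.Dom]

theorem compPred_or' {p q : ℕ → Prop} (hp : ComputablePred p) (hq : ComputablePred q) :
    ComputablePred fun a => p a ∨ q a := by
  obtain ⟨f, hf, rfl⟩ := ComputablePred.computable_iff.1 hp
  obtain ⟨g, hg, rfl⟩ := ComputablePred.computable_iff.1 hq
  exact ComputablePred.computable_iff.2 ⟨fun a => f a || g a,
    (Computable.cond hf (Computable.const true) hg).of_eq fun a => by cases f a <;> simp,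
    funext fun a => by simp⟩

theorem compSet_union {X Y : Set ℕ} (hX : ComputableSet X) (hY : ComputableSet Y) :
    ComputableSet (X ∪ Y) :=
  (compPred_or' hX hY).of_eq fun x => (Set.mem_union x X Y).symm

theorem compSet_finite {X : Set ℕ} (hX : X.Finite) : ComputableSet X := by
  refine Set.Finite.induction_on _ hX ?_ ?_
  · exact (ComputablePred.computable_iff.2 ⟨fun _ => false, Computable.const false,
      funext fun x => by simp⟩ : ComputablePred fun _ : ℕ => False).of_eq fun x => by simp
  · intro a s _ _ ih
    have h1 : ComputablePred fun x : ℕ => x = a :=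
      ComputablePred.computable_iff.2 ⟨fun x => decide (x = a),
        (Primrec.eq.comp Primrec.id (Primrec.const a)).decide.to_comp, funext fun x => by simp⟩
    exact (compPred_or' h1 ih).of_eq fun x => by simp [Set.mem_insert_iff]

theorem compSet_biUnion {s : Set ℕ} (hs : s.Finite) {R : ℕ → Set ℕ}
    (h : ∀ i, ComputableSet (R i)) : ComputableSet (⋃ i ∈ s, R i) := by
  refine Set.Finite.induction_on _ hs ?_ ?_
  · have : (⋃ i ∈ (∅ : Set ℕ), R i) = ∅ := by simp
    rw [this]; exact compSet_finite finite_empty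
  · intro a s _ _ ih
    have h2 : (⋃ i ∈ insert a s, R i) = R a ∪ ⋃ i ∈ s, R i := by simp [Set.biUnion_insert]
    rw [h2]; exact compSet_union (h a) ih

theorem ceSet_union_comp {X C : Set ℕ} (hX : CESet X) (hC : ComputableSet C) :
    CESet (X ∪ C) :=
  (rePred_or' hX hC.to_re).of_eq fun x => (Set.mem_union x X C).symm

theorem subsetStar_of_subset {X Y : Set ℕ} (h : X ⊆ Y) : SubsetStar X Y := by
  unfold SubsetStar; rw [Set.diff_eq_empty.2 h]; exact Set.finite_empty

theorem inj_of_pairwise_disjoint {S : ℕ → Set ℕ} (h : Pairwise (Function.onFun Disjoint S))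
    (hne : ∀ i, (S i).Nonempty) : Function.Injective S := by
  intro i j hij
  by_contra hne'
  exact (hne i).ne_empty ((h hne').eq_bot_of_le (le_of_eq hij))

theorem exists_enum {S : Set ℕ} (hS : S.Infinite) :
    ∃ e : ℕ → ℕ, Function.Injective e ∧ Set.range e = S := by
  obtain ⟨d⟩ := Set.countable_infinite_iff_nonempty_denumerable.1 ⟨S.to_countable, hS⟩
  refine ⟨fun n => ((Denumerable.eqv S).symm n : ℕ),
    Subtype.val_injective.comp (Denumerable.eqv S).symm.injective, ?_⟩
  have : Set.range (fun n => ((Denumerable.eqv ↑S).symm n : ℕ))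
      = Subtype.val '' Set.range ((Denumerable.eqv ↑S).symm) := Set.range_comp _ _
  rw [this, (Denumerable.eqv ↑S).symm.range_eq_univ, Set.image_univ, Subtype.range_val]

theorem generates_transfer {A : Set ℕ} {G G' : Set (Set ℕ)}
    (hG : Generates A G) (hcnt : G'.Countable)
    (hce : ∀ X ∈ G', CESet X) (hdisj : ∀ X ∈ G', Disjoint X A)
    (htr : ∀ Y ∈ G, ∃ X ∈ G', SubsetStar Y X) :
    Generates A G' := by
  refine ⟨hcnt, hce, hdisj, fun D hD hDA => ?_⟩
  obtain ⟨F, hFG, hFfin, hFcov⟩ := hG.2.2.2 D hD hDA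
  choose! f hf1 hf2 using htr
  refine ⟨f '' F, ?_, hFfin.image f, ?_⟩
  · rintro _ ⟨Y, hY, rfl⟩; exact hf1 Y (hFG hY)
  · have hsub : D \ ⋃₀ (f '' F) ⊆ (D \ ⋃₀ F) ∪ ⋃ Y ∈ F, (Y \ f Y) := by
      intro x hx
      by_cases hxF : x ∈ ⋃₀ F
      · obtain ⟨Y, hY, hxY⟩ := hxF
        exact Or.inr (Set.mem_biUnion hY ⟨hxY, fun hxf => hx.2 ⟨f Y, ⟨Y, hY, rfl⟩, hxf⟩⟩)
      · exact Or.inl ⟨hx.1, hxF⟩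
    exact (hFcov.union (hFfin.biUnion fun Y hY => hf2 Y (hFG hY))).subset hsub

end Helpers

theorem step2_main {A D0 : Set ℕ} {R : ℕ → Set ℕ}
    (hfam : Type7Family D0 R)
    (hgen : Generates A (insert D0 (Set.range R)))
    (hinf : ∀ j, (R j \ D0).Infinite) :
    ∃ (D0' : Set ℕ) (R' : ℕ → Set ℕ), Type7Family D0' R' ∧
      Generates A (insert D0' (Set.range R')) ∧
      (∀ j, (R' j \ D0').Infinite) ∧
      D0' ⊆ ⋃ i, R' i ∧ (⋃ i, R' i) = Aᶜ := by
  obtain ⟨hD0ce, hD0nc, hRinj, hne, hRci, hRdisj, hwit⟩ := hfam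
  have hDA : Disjoint D0 A := hgen.2.2.1 D0 (Set.mem_insert _ _)
  have hRA : ∀ i, Disjoint (R i) A := fun i =>
    hgen.2.2.1 _ (Set.mem_insert_of_mem _ ⟨i, rfl⟩)
  set L : Set ℕ := Aᶜ \ ⋃ i, R i with hL
  have hRsubAc : (⋃ i, R i) ⊆ Aᶜ :=
    Set.iUnion_subset fun i x hx hxA => Set.disjoint_left.1 (hRA i) hx hxA
  obtain ⟨f, hffin, hfsub, hfdisj, hfunion⟩ :
      ∃ f : ℕ → Set ℕ, (∀ i, (f i).Finite) ∧ (∀ i, f i ⊆ L) ∧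
        (Pairwise fun i j => Disjoint (f i) (f j)) ∧ (⋃ i, f i) = L := by
    by_cases hLf : L.Finite
    · refine ⟨fun i => if i = 0 then L else ∅, ?_, ?_, ?_, ?_⟩
      · intro i; by_cases h : i = 0 <;> simp [h, hLf]
      · intro i; by_cases h : i = 0 <;> simp [h]
      · intro i j hij
        by_cases hi : i = 0
        · have hj : ¬ j = 0 := fun h => hij (by rw [hi, h])
          simp [hi, hj]
        · simp [hi]
      · ext x
        simp only [Set.mem_iUnion]
        constructor
        · rintro ⟨i, hi⟩
          by_cases h : i = 0
          · simpa [h] using hi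
          · simp [h] at hi
        · intro hx; exact ⟨0, by simpa using hx⟩
    · obtain ⟨g, hginj, hgrange⟩ := exists_enum hLf
      refine ⟨fun i => {g i}, fun i => Set.finite_singleton _, ?_, ?_, ?_⟩
      · intro i x hx
        rw [Set.mem_singleton_iff] at hx
        rw [hx, ← hgrange]; exact ⟨i, rfl⟩
      · intro i j hij
        simp only [Set.disjoint_singleton_left, Set.mem_singleton_iff]
        exact fun h => hij (hginj h)
      · rw [← hgrange]; exact Set.iUnion_singleton_eq_range g
  set R' : ℕ → Set ℕ := fun i => R i ∪ f i with hR'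
  have hfR : ∀ i j, Disjoint (f i) (R j) := fun i j =>
    Set.disjoint_left.2 fun x hx hxR => (hfsub i hx).2 ⟨_, ⟨j, rfl⟩, hxR⟩
  have hR'comp : ∀ i, ComputableSet (R' i) := fun i =>
    compSet_union (hRci i).1 (compSet_finite (hffin i))
  have hR'inf : ∀ i, (R' i).Infinite := fun i =>
    ((hRci i).2).mono Set.subset_union_left
  have hR'disj : Pairwise (Function.onFun Disjoint R') := by
    intro i j hij
    refine Set.disjoint_union_left.2 ⟨?_, ?_⟩ <;> refine Set.disjoint_union_right.2 ⟨?_, ?_⟩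
    · exact hRdisj hij
    · exact (hfR j i).symm
    · exact hfR i j
    · exact hfdisj hij
  have hR'union : (⋃ i, R' i) = Aᶜ := by
    have : (⋃ i, R' i) = (⋃ i, R i) ∪ ⋃ i, f i := Set.iUnion_union_distrib R f
    rw [this, hfunion, hL, Set.union_diff_cancel hRsubAc]
  refine ⟨D0, R', ⟨hD0ce, hD0nc, ?_, ?_, fun i => ⟨hR'comp i, hR'inf i⟩, hR'disj, ?_⟩,
    ?_, ?_, ?_, hR'union⟩
  · exact inj_of_pairwise_disjoint hR'disj fun i => (hR'inf i).nonempty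
  · intro i h
    exact hD0nc (h ▸ hR'comp i)
  · refine hwit.mono fun i hi => ?_
    exact hi.mono (Set.inter_subset_inter_right _ Set.subset_union_left)
  · refine generates_transfer hgen ((Set.countable_range R').insert D0) ?_ ?_ ?_
    · rintro X (rfl | ⟨i, rfl⟩)
      · exact hD0ce
      · exact (hR'comp i).to_re
    · rintro X (rfl | ⟨i, rfl⟩)
      · exact hDA
      · refine Set.disjoint_union_left.2 ⟨hRA i, ?_⟩
        exact Set.disjoint_left.2 fun x hx => fun hxA => (hfsub i hx).1 hxA
    · rintro Y (rfl | ⟨i, rfl⟩)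
      · exact ⟨Y, Set.mem_insert _ _, subsetStar_of_subset (le_refl _)⟩
      · exact ⟨R' i, Set.mem_insert_of_mem _ ⟨i, rfl⟩,
          subsetStar_of_subset Set.subset_union_left⟩
  · exact fun j => (hinf j).mono (Set.diff_subset_diff_left Set.subset_union_left)
  · intro x hx
    rw [hR'union]
    exact Set.disjoint_left.1 hDA hx

theorem stmt_13 (A : Set ℕ) (hA : CESet A) (h7 : SetOfType A 7) :
    ∃ (D0 : Set ℕ) (R : ℕ → Set ℕ), Type7Family D0 R ∧
      Generates A (insert D0 (Set.range R)) ∧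
      (∀ j, (R j \ D0).Infinite) ∧
      D0 ⊆ ⋃ i, R i ∧ (⋃ i, R i) = Aᶜ := by
  obtain ⟨⟨G, hG, hT7⟩, hmin⟩ := h7
  obtain ⟨D0, R, rfl, hfam⟩ := hT7
  obtain ⟨hD0ce, hD0nc, hRinj, hneq, hRci, hRdisj, hwit⟩ := hfam
  have hDA : Disjoint D0 A := hG.2.2.1 D0 (Set.mem_insert _ _)
  have hRA : ∀ i, Disjoint (R i) A := fun i => hG.2.2.1 _ (Set.mem_insert_of_mem _ ⟨i, rfl⟩)
  set I : Set ℕ := {i | (R i \ D0).Finite} with hIdef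
  have hD0inf : ∀ i ∈ I, D0.Infinite := by
    intro i hi
    have h1 : (R i \ (R i \ D0)).Infinite := ((hRci i).2).diff hi
    refine h1.mono fun x hx => ?_
    by_contra hxD
    exact hx.2 ⟨hx.1, hxD⟩
  by_cases hIc : Iᶜ.Finite
  · -- almost all R i are almost contained in D0 : contradiction via Type 2 / 3
    exfalso
    set W : Set ℕ := D0 ∪ ⋃ i ∈ Iᶜ, R i with hWdef
    have hWce : CESet W := ceSet_union_comp hD0ce (compSet_biUnion hIc fun i => (hRci i).1)
    have hWA : Disjoint W A := by
      refine Set.disjoint_union_left.2 ⟨hDA, Set.disjoint_left.2 ?_⟩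
      intro x hx
      obtain ⟨i, -, hxi⟩ := Set.mem_iUnion₂.1 hx
      exact Set.disjoint_left.1 (hRA i) hxi
    have hWinf : W.Infinite := by
      obtain ⟨i, hi⟩ := hIc.infinite_compl.nonempty
      rw [compl_compl] at hi
      exact (hD0inf i hi).mono Set.subset_union_left
    have hGen : Generates A {W} := by
      refine generates_transfer hG (Set.countable_singleton W) ?_ ?_ ?_
      · intro X hX; rw [Set.mem_singleton_iff] at hX; subst hX; exact hWce
      · intro X hX; rw [Set.mem_singleton_iff] at hX; subst hX; exact hWA
      · rintro Y (rfl | ⟨i, rfl⟩)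
        · exact ⟨W, rfl, subsetStar_of_subset Set.subset_union_left⟩
        · by_cases hi : i ∈ I
          · exact ⟨W, rfl, hi.subset (Set.diff_subset_diff_right Set.subset_union_left)⟩
          · exact ⟨W, rfl, subsetStar_of_subset
              (subset_trans (Set.subset_biUnion_of_mem hi) Set.subset_union_right)⟩
    by_cases hWc : ComputableSet W
    · exact hmin 2 (by norm_num) ⟨{W}, hGen, ⟨W, rfl, hWc, hWinf⟩⟩
    · exact hmin 3 (by norm_num) ⟨{W}, hGen, ⟨W, rfl, hWce, hWc, hWinf⟩⟩
  · set J : Set ℕ := {i | i ∈ Iᶜ ∧ (D0 ∩ R i).Nonempty} with hJdef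
    by_cases hJ : J.Finite
    · -- only finitely many "honest" R i meet D0 : contradiction via Type 4 / 5
      exfalso
      set C : Set ℕ := ⋃ i ∈ J, R i with hCdef
      set D0' : Set ℕ := D0 ∪ C with hD0'def
      have hKinf : (Iᶜ \ J).Infinite := (Set.Infinite.diff hIc hJ)
      obtain ⟨e, einj, erange⟩ := exists_enum hKinf
      have heK : ∀ n, e n ∈ Iᶜ \ J := fun n => erange ▸ Set.mem_range_self n
      have hD0'ce : CESet D0' :=
        ceSet_union_comp hD0ce (compSet_biUnion hJ fun i => (hRci i).1)
      have hD0'A : Disjoint D0' A := by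
        refine Set.disjoint_union_left.2 ⟨hDA, Set.disjoint_left.2 ?_⟩
        intro x hx
        obtain ⟨i, -, hxi⟩ := Set.mem_iUnion₂.1 hx
        exact Set.disjoint_left.1 (hRA i) hxi
      have hD0'dis : ∀ n, Disjoint D0' (R (e n)) := by
        intro n
        obtain ⟨hnI, hnJ⟩ := heK n
        refine Set.disjoint_union_left.2 ⟨?_, ?_⟩
        · rw [Set.disjoint_iff_inter_eq_empty, ← Set.not_nonempty_iff_eq_empty]
          exact fun h => hnJ ⟨hnI, h⟩
        · refine Set.disjoint_left.2 ?_
          intro x hx hxe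
          obtain ⟨j, hjJ, hxj⟩ := Set.mem_iUnion₂.1 hx
          have hje : j ≠ e n := fun h => hnJ (h ▸ hjJ)
          exact Set.disjoint_left.1 (hRdisj hje) hxj hxe
      obtain ⟨i0, hi0⟩ : ∃ i, i ∈ I := by
        obtain ⟨i, hiw, hiJ⟩ := (hwit.diff hJ).nonempty
        refine ⟨i, ?_⟩
        by_contra hiI
        exact hiJ ⟨hiI, hiw⟩
      have hD0'inf : D0'.Infinite := (hD0inf i0 hi0).mono Set.subset_union_left
      have hGen' : Generates A (insert D0' (Set.range fun n => R (e n))) := by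
        refine generates_transfer hG ((Set.countable_range _).insert D0') ?_ ?_ ?_
        · rintro X (rfl | ⟨n, rfl⟩)
          · exact hD0'ce
          · exact ((hRci (e n)).1).to_re
        · rintro X (rfl | ⟨n, rfl⟩)
          · exact hD0'A
          · exact hRA (e n)
        · rintro Y (rfl | ⟨i, rfl⟩)
          · exact ⟨D0', Set.mem_insert _ _, subsetStar_of_subset Set.subset_union_left⟩
          · by_cases hi : i ∈ I
            · exact ⟨D0', Set.mem_insert _ _,
                hi.subset (Set.diff_subset_diff_right Set.subset_union_left)⟩
            · by_cases hiJ : i ∈ J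
              · exact ⟨D0', Set.mem_insert _ _, subsetStar_of_subset
                  (subset_trans (Set.subset_biUnion_of_mem hiJ) Set.subset_union_right)⟩
              · obtain ⟨n, hn⟩ : i ∈ Set.range e := by
                  rw [erange]; exact ⟨hi, hiJ⟩
                exact ⟨R (e n), Set.mem_insert_of_mem _ ⟨n, rfl⟩,
                  by rw [hn]; exact subsetStar_of_subset (le_refl _)⟩
      by_cases hD0'c : ComputableSet D0'
      · -- Type 4
        set Dfam : ℕ → Set ℕ := fun n => Nat.casesOn n D0' (fun m => R (e m)) with hDfam
        have hrange : Set.range Dfam = insert D0' (Set.range fun n => R (e n)) := by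
          ext X
          constructor
          · rintro ⟨n, rfl⟩
            cases n with
            | zero => exact Set.mem_insert _ _
            | succ m => exact Set.mem_insert_of_mem _ ⟨m, rfl⟩
          · rintro (rfl | ⟨m, rfl⟩)
            · exact ⟨0, rfl⟩
            · exact ⟨m + 1, rfl⟩
        have hpair : Pairwise (Function.onFun Disjoint Dfam) := by
          intro m n hmn
          match m, n with
          | 0, 0 => exact absurd rfl hmn
          | 0, k + 1 => exact hD0'dis k
          | k + 1, 0 => exact (hD0'dis k).symm
          | k + 1, l + 1 =>
            exact hRdisj (einj.ne fun h => hmn (by rw [h]))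
        have hDinf : ∀ n, (Dfam n).Infinite := by
          intro n
          cases n with
          | zero => exact hD0'inf
          | succ m => exact (hRci (e m)).2
        refine hmin 4 (by norm_num) ⟨Set.range Dfam, ?_, Dfam, rfl,
          inj_of_pairwise_disjoint hpair fun n => (hDinf n).nonempty, ?_, hpair⟩
        · rw [hrange]; exact hGen'
        · intro n
          cases n with
          | zero => exact ⟨hD0'c, hD0'inf⟩
          | succ m => exact ⟨(hRci (e m)).1, (hRci (e m)).2⟩
      · -- Type 5
        refine hmin 5 (by norm_num) ⟨_, hGen', D0', (fun n => R (e n)), rfl,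
          hD0'ce, hD0'c, hD0'inf, hRinj.comp einj,
          fun n h => hD0'c (h ▸ (hRci (e n)).1),
          fun n => hRci (e n), fun m n hmn => hRdisj (einj.ne hmn), hD0'dis⟩
    · -- good case : infinitely many R i with R i \ D0 infinite meet D0
      obtain ⟨e, einj, erange⟩ := exists_enum hIc
      have heIc : ∀ n, e n ∈ Iᶜ := fun n => erange ▸ Set.mem_range_self n
      have hfam' : Type7Family D0 (fun n => R (e n)) := by
        refine ⟨hD0ce, hD0nc, hRinj.comp einj, fun n => hneq (e n), fun n => hRci (e n),
          fun m n hmn => hRdisj (einj.ne hmn), ?_⟩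
        have hJr : J ⊆ Set.range e := by rw [erange]; exact fun i hi => hi.1
        exact (Set.Infinite.preimage hJ hJr).mono fun n hn => hn.2
      have hgen' : Generates A (insert D0 (Set.range fun n => R (e n))) := by
        refine generates_transfer hG ((Set.countable_range _).insert D0) ?_ ?_ ?_
        · rintro X (rfl | ⟨n, rfl⟩)
          · exact hD0ce
          · exact ((hRci (e n)).1).to_re
        · rintro X (rfl | ⟨n, rfl⟩)
          · exact hDA
          · exact hRA (e n)
        · rintro Y (rfl | ⟨i, rfl⟩)
          · exact ⟨Y, Set.mem_insert _ _, subsetStar_of_subset (le_refl _)⟩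
          · by_cases hi : i ∈ I
            · exact ⟨D0, Set.mem_insert _ _, hi⟩
            · obtain ⟨n, hn⟩ : i ∈ Set.range e := by rw [erange]; exact hi
              exact ⟨R (e n), Set.mem_insert_of_mem _ ⟨n, rfl⟩,
                by rw [hn]; exact subsetStar_of_subset (le_refl _)⟩
      exact step2_main hfam' hgen' fun n => heIc n
end

section
/- Let D be a hhsimple subset of ℕ and let E ⊆ D be a c.e. set that is major in D. Then every hhsimple set H with E ⊆ H satisfies D ⊆* H. -/
open Set Function

/-!
Let `V` be a complement of `D` in the Boolean algebra of c.e. supersets of `H` modulo finite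
sets. Then `V ∪ H` almost contains `Dᶜ`, so, `E` being major in `D`, it almost contains `Eᶜ ⊇ Dᶜ`
as well. Hence `D \ H` lies almost inside `V`, and `D ∩ V` is almost contained in `H`.
-/

theorem REPred.or {α : Type*} [Primcodable α] {p q : α → Prop} (hp : REPred p)
    (hq : REPred q) : REPred fun a => p a ∨ q a := by
  obtain ⟨k, hk, hdom⟩ := Partrec.merge' hp hq
  exact hk.dom_re.of_eq fun a => by simp [(hdom a).2, Part.assert]

theorem CESet.union {A B : Set ℕ} (hA : CESet A) (hB : CESet B) : CESet (A ∪ B) :=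
  hA.or hB

theorem SubsetStar.of_eqStar_union_univ {W V : Set ℕ} (h : EqStar (W ∪ V) univ) :
    SubsetStar Wᶜ V :=
  h.2.subset fun _ ⟨hW, hV⟩ => ⟨trivial, fun hWV => hWV.elim hW hV⟩

theorem stmt_16_general (D E : Set ℕ) (hE : MajorIn E D)
    (H : Set ℕ) (hH : HHSimple H) (hEH : E ⊆ H) :
    SubsetStar D H := by
  obtain ⟨-, hDce, -, -, hmajor⟩ := hE
  obtain ⟨hHce, -, hcomplement⟩ := hH
  obtain ⟨V, hVce, hmeet, hjoin⟩ := hcomplement D hDce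
  have hDc : SubsetStar Dᶜ (V ∪ H) :=
    SubsetStar.of_eqStar_union_univ (by rwa [union_assoc] at hjoin)
  have hEc : SubsetStar Eᶜ (V ∪ H) := hmajor _ (hVce.union hHce) hDc
  refine (hEc.union hmeet.1).subset fun x ⟨hxD, hxH⟩ => ?_
  by_cases hxVH : x ∈ V ∪ H
  · exact Or.inr ⟨⟨Or.inl hxD, hxVH⟩, hxH⟩
  · exact Or.inl ⟨fun hxE => hxH (hEH hxE), hxVH⟩

theorem stmt_16 (D E : Set ℕ) (hD : HHSimple D) (hE : MajorIn E D)
    (H : Set ℕ) (hH : HHSimple H) (hEH : E ⊆ H) :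
    SubsetStar D H :=
  stmt_16_general D E hE H hH hEH
end
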